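/- For the Case I knotted sphere with unit-speed profile curve and φ'(u)² < 1 for all u, the mean curvature vector satisfies, at every point (u,v): 2·H⃗(u,v) = (1/(1 − φ'²))·( x̄₁, x̄₂, x̄₃·cos v + x̄₄·sin v, x̄₃·sin v − x̄₄·cos v ), where x̄₁ = x₁'' + (φ'φ''/(1 − φ'²))·x₁', x̄₂ = x₂'' + (φ'φ''/(1 − φ'²))·x₂', x̄₃ = −(1 − φ'²)·cos φ, and x̄₄ = (1 − φ'²)·sin φ. -/

import Mathlib

open Real

noncomputable def dot4 (a b : Fin 4 → ℝ) : ℝ :=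
  a 0 * b 0 + a 1 * b 1 + a 2 * b 2 + a 3 * b 3

lemma hasDerivAt_vec4 {f1 f2 f3 f4 : ℝ → ℝ} {g1 g2 g3 g4 : ℝ} {u : ℝ}
    (h1 : HasDerivAt f1 g1 u) (h2 : HasDerivAt f2 g2 u)
    (h3 : HasDerivAt f3 g3 u) (h4 : HasDerivAt f4 g4 u) :
    HasDerivAt (fun t => (![f1 t, f2 t, f3 t, f4 t] : Fin 4 → ℝ)) ![g1, g2, g3, g4] u := by
  rw [hasDerivAt_pi]
  intro i
  fin_cases i
  · simpa using h1
  · simpa using h2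
  · simpa using h3
  · simpa using h4

theorem caseI_mean_curvature_vector_formula
    (x₁ x₂ x₃ x₄ : ℝ → ℝ)
    (hx₁ : ContDiff ℝ (⊤ : ℕ∞) x₁) (hx₂ : ContDiff ℝ (⊤ : ℕ∞) x₂)
    (hx₃ : ContDiff ℝ (⊤ : ℕ∞) x₃) (hx₄ : ContDiff ℝ (⊤ : ℕ∞) x₄)
    (hunit : ∀ u, deriv x₁ u ^ 2 + deriv x₂ u ^ 2 + deriv x₃ u ^ 2 + deriv x₄ u ^ 2 = 1)
    (X : ℝ → ℝ → Fin 4 → ℝ)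
    (hX : ∀ u v, X u v =
      ![x₁ u, x₂ u, x₃ u * Real.cos v - x₄ u * Real.sin v,
        x₃ u * Real.sin v + x₄ u * Real.cos v])
    (Xu Xv : ℝ → ℝ → Fin 4 → ℝ)
    (hXu : ∀ u v, Xu u v = deriv (fun t => X t v) u)
    (hXv : ∀ u v, Xv u v = deriv (fun t => X u t) v)
    (φ : ℝ → ℝ) (hφ : ContDiff ℝ (⊤ : ℕ∞) φ)
    (hx₃φ : ∀ u, x₃ u = Real.cos (φ u)) (hx₄φ : ∀ u, x₄ u = Real.sin (φ u))
    (hφ' : ∀ u, (deriv φ u) ^ 2 < 1)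
    (Xuu Xuv Xvv : ℝ → ℝ → Fin 4 → ℝ)
    (hXuu : ∀ u v, Xuu u v = deriv (fun t => Xu t v) u)
    (hXuv : ∀ u v, Xuv u v = deriv (fun t => Xu u t) v)
    (hXvv : ∀ u v, Xvv u v = deriv (fun t => Xv u t) v)
    (E F G W : ℝ → ℝ → ℝ)
    (hE : ∀ u v, E u v = dot4 (Xu u v) (Xu u v))
    (hF : ∀ u v, F u v = dot4 (Xu u v) (Xv u v))
    (hG : ∀ u v, G u v = dot4 (Xv u v) (Xv u v))
    (hW : ∀ u v, W u v = Real.sqrt (E u v * G u v - F u v ^ 2))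
    (Fu Gu : ℝ → ℝ → ℝ)
    (hFu : ∀ u v, Fu u v = deriv (fun t => F t v) u)
    (hGu : ∀ u v, Gu u v = deriv (fun t => G t v) u)
    (huu huv hvv : ℝ → ℝ → Fin 4 → ℝ)
    (hhuu : ∀ u v, huu u v = Xuu u v + (F u v * Fu u v / W u v ^ 2) • Xu u v
        - (Fu u v / W u v ^ 2) • Xv u v)
    (hhuv : ∀ u v, huv u v = Xuv u v + (F u v * Gu u v / (2 * W u v ^ 2)) • Xu u v
        - (Gu u v / (2 * W u v ^ 2)) • Xv u v)
    (hhvv : ∀ u v, hvv u v = Xvv u v + (G u v * Gu u v / (2 * W u v ^ 2)) • Xu u v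
        - (F u v * Gu u v / (2 * W u v ^ 2)) • Xv u v)
    (H : ℝ → ℝ → Fin 4 → ℝ)
    (hH : ∀ u v, H u v = (1 / (2 * W u v ^ 2)) •
        (E u v • hvv u v - (2 * F u v) • huv u v + G u v • huu u v))
    : ∀ u v,
      (2 : ℝ) • H u v = (1 / (1 - deriv φ u ^ 2)) •
        (![deriv (deriv x₁) u
            + (deriv φ u * deriv (deriv φ) u / (1 - deriv φ u ^ 2)) * deriv x₁ u,
          deriv (deriv x₂) u
            + (deriv φ u * deriv (deriv φ) u / (1 - deriv φ u ^ 2)) * deriv x₂ u,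
          (-(1 - deriv φ u ^ 2) * Real.cos (φ u)) * Real.cos v
            + ((1 - deriv φ u ^ 2) * Real.sin (φ u)) * Real.sin v,
          (-(1 - deriv φ u ^ 2) * Real.cos (φ u)) * Real.sin v
            - ((1 - deriv φ u ^ 2) * Real.sin (φ u)) * Real.cos v] : Fin 4 → ℝ) := by
  -- smoothness bookkeeping
  have sm : ∀ f : ℝ → ℝ, ContDiff ℝ (⊤ : ℕ∞) f → Differentiable ℝ f ∧ Differentiable ℝ (deriv f) := by
    intro f hf
    have h' : ContDiff ℝ ((⊤:ℕ∞):WithTop ℕ∞) f := hf.of_le (by simp)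
    exact ⟨h'.differentiable (by simp),
      ((contDiff_infty_iff_deriv.mp h').2).differentiable (by simp)⟩
  obtain ⟨hd1, hdd1⟩ := sm x₁ hx₁
  obtain ⟨hd2, hdd2⟩ := sm x₂ hx₂
  obtain ⟨hd3, hdd3⟩ := sm x₃ hx₃
  obtain ⟨hd4, hdd4⟩ := sm x₄ hx₄
  obtain ⟨hdφ, hddφ⟩ := sm φ hφ
  -- first derivatives of the surface
  have hXu' : ∀ u v, Xu u v = ![deriv x₁ u, deriv x₂ u,
      deriv x₃ u * Real.cos v - deriv x₄ u * Real.sin v,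
      deriv x₃ u * Real.sin v + deriv x₄ u * Real.cos v] := by
    intro u v
    rw [hXu]
    have hfun : (fun t => X t v) = fun t => (![x₁ t, x₂ t,
        x₃ t * Real.cos v - x₄ t * Real.sin v,
        x₃ t * Real.sin v + x₄ t * Real.cos v] : Fin 4 → ℝ) := funext fun t => hX t v
    rw [hfun]
    exact (hasDerivAt_vec4 (hd1 u).hasDerivAt (hd2 u).hasDerivAt
      (((hd3 u).hasDerivAt.mul_const _).sub ((hd4 u).hasDerivAt.mul_const _))
      (((hd3 u).hasDerivAt.mul_const _).add ((hd4 u).hasDerivAt.mul_const _))).deriv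
  have hXv' : ∀ u v, Xv u v = ![0, 0,
      x₃ u * (-Real.sin v) - x₄ u * Real.cos v,
      x₃ u * Real.cos v + x₄ u * (-Real.sin v)] := by
    intro u v
    rw [hXv]
    have hfun : (fun t => X u t) = fun t => (![x₁ u, x₂ u,
        x₃ u * Real.cos t - x₄ u * Real.sin t,
        x₃ u * Real.sin t + x₄ u * Real.cos t] : Fin 4 → ℝ) := funext fun t => hX u t
    rw [hfun]
    exact (hasDerivAt_vec4 (hasDerivAt_const v (x₁ u)) (hasDerivAt_const v (x₂ u))
      (((Real.hasDerivAt_cos v).const_mul (x₃ u)).sub ((Real.hasDerivAt_sin v).const_mul (x₄ u)))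
      (((Real.hasDerivAt_sin v).const_mul (x₃ u)).add ((Real.hasDerivAt_cos v).const_mul (x₄ u)))).deriv
  -- second derivatives
  have hXuu' : ∀ u v, Xuu u v = ![deriv (deriv x₁) u, deriv (deriv x₂) u,
      deriv (deriv x₃) u * Real.cos v - deriv (deriv x₄) u * Real.sin v,
      deriv (deriv x₃) u * Real.sin v + deriv (deriv x₄) u * Real.cos v] := by
    intro u v
    rw [hXuu]
    have hfun : (fun t => Xu t v) = fun t => (![deriv x₁ t, deriv x₂ t,
        deriv x₃ t * Real.cos v - deriv x₄ t * Real.sin v,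
        deriv x₃ t * Real.sin v + deriv x₄ t * Real.cos v] : Fin 4 → ℝ) :=
      funext fun t => hXu' t v
    rw [hfun]
    exact (hasDerivAt_vec4 (hdd1 u).hasDerivAt (hdd2 u).hasDerivAt
      (((hdd3 u).hasDerivAt.mul_const _).sub ((hdd4 u).hasDerivAt.mul_const _))
      (((hdd3 u).hasDerivAt.mul_const _).add ((hdd4 u).hasDerivAt.mul_const _))).deriv
  have hXuv' : ∀ u v, Xuv u v = ![0, 0,
      deriv x₃ u * (-Real.sin v) - deriv x₄ u * Real.cos v,
      deriv x₃ u * Real.cos v + deriv x₄ u * (-Real.sin v)] := by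
    intro u v
    rw [hXuv]
    have hfun : (fun t => Xu u t) = fun t => (![deriv x₁ u, deriv x₂ u,
        deriv x₃ u * Real.cos t - deriv x₄ u * Real.sin t,
        deriv x₃ u * Real.sin t + deriv x₄ u * Real.cos t] : Fin 4 → ℝ) :=
      funext fun t => hXu' u t
    rw [hfun]
    exact (hasDerivAt_vec4 (hasDerivAt_const v _) (hasDerivAt_const v _)
      (((Real.hasDerivAt_cos v).const_mul _).sub ((Real.hasDerivAt_sin v).const_mul _))
      (((Real.hasDerivAt_sin v).const_mul _).add ((Real.hasDerivAt_cos v).const_mul _))).deriv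
  have hXvv' : ∀ u v, Xvv u v = ![0, 0,
      x₃ u * (-Real.cos v) - x₄ u * (-Real.sin v),
      x₃ u * (-Real.sin v) + x₄ u * (-Real.cos v)] := by
    intro u v
    rw [hXvv]
    have hfun : (fun t => Xv u t) = fun t => (![0, 0,
        x₃ u * (-Real.sin t) - x₄ u * Real.cos t,
        x₃ u * Real.cos t + x₄ u * (-Real.sin t)] : Fin 4 → ℝ) :=
      funext fun t => hXv' u t
    rw [hfun]
    exact (hasDerivAt_vec4 (hasDerivAt_const v _) (hasDerivAt_const v _)
      (((Real.hasDerivAt_sin v).neg.const_mul (x₃ u)).sub ((Real.hasDerivAt_cos v).const_mul (x₄ u)))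
      (((Real.hasDerivAt_cos v).const_mul (x₃ u)).add ((Real.hasDerivAt_sin v).neg.const_mul (x₄ u)))).deriv
  -- derivatives of x₃, x₄ in terms of φ
  have hx₃' : ∀ u, deriv x₃ u = -Real.sin (φ u) * deriv φ u := by
    intro u
    have : x₃ = fun t => Real.cos (φ t) := funext hx₃φ
    rw [this]
    exact ((hdφ u).hasDerivAt.cos).deriv
  have hx₄' : ∀ u, deriv x₄ u = Real.cos (φ u) * deriv φ u := by
    intro u
    have : x₄ = fun t => Real.sin (φ t) := funext hx₄φ
    rw [this]
    exact ((hdφ u).hasDerivAt.sin).deriv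
  have hx₃'' : ∀ u, deriv (deriv x₃) u =
      (-(Real.cos (φ u) * deriv φ u)) * deriv φ u + (-Real.sin (φ u)) * deriv (deriv φ) u := by
    intro u
    have : deriv x₃ = fun t => -Real.sin (φ t) * deriv φ t := funext hx₃'
    rw [this]
    exact (((hdφ u).hasDerivAt.sin.neg).mul (hddφ u).hasDerivAt).deriv
  have hx₄'' : ∀ u, deriv (deriv x₄) u =
      (-Real.sin (φ u) * deriv φ u) * deriv φ u + Real.cos (φ u) * deriv (deriv φ) u := by
    intro u
    have : deriv x₄ = fun t => Real.cos (φ t) * deriv φ t := funext hx₄'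
    rw [this]
    exact (((hdφ u).hasDerivAt.cos).mul (hddφ u).hasDerivAt).deriv
  -- first fundamental form
  have hE1 : ∀ u v, E u v = 1 := by
    intro u v
    rw [hE, hXu' u v]
    simp only [dot4, Matrix.cons_val_zero, Matrix.cons_val_one, Matrix.head_cons,
      Matrix.cons_val_two, Matrix.tail_cons, Matrix.cons_val_three]
    linear_combination hunit u
      + (deriv x₃ u ^ 2 + deriv x₄ u ^ 2 - 1) * Real.sin_sq_add_cos_sq v
      + Real.sin_sq_add_cos_sq v
  have hF1 : ∀ u v, F u v = deriv φ u := by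
    intro u v
    rw [hF, hXu' u v, hXv' u v]
    simp only [dot4, Matrix.cons_val_zero, Matrix.cons_val_one, Matrix.head_cons,
      Matrix.cons_val_two, Matrix.tail_cons, Matrix.cons_val_three]
    rw [hx₃' u, hx₄' u, hx₃φ u, hx₄φ u]
    linear_combination deriv φ u * (Real.sin (φ u) ^ 2 + Real.cos (φ u) ^ 2) * Real.sin_sq_add_cos_sq v
      + deriv φ u * Real.sin_sq_add_cos_sq (φ u)
  have hG1 : ∀ u v, G u v = 1 := by
    intro u v
    rw [hG, hXv' u v]
    simp only [dot4, Matrix.cons_val_zero, Matrix.cons_val_one, Matrix.head_cons,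
      Matrix.cons_val_two, Matrix.tail_cons, Matrix.cons_val_three]
    rw [hx₃φ u, hx₄φ u]
    linear_combination (Real.sin (φ u) ^ 2 + Real.cos (φ u) ^ 2) * Real.sin_sq_add_cos_sq v
      + Real.sin_sq_add_cos_sq (φ u)
  have hpos : ∀ u, (0:ℝ) < 1 - deriv φ u ^ 2 := fun u => by nlinarith [hφ' u]
  have hW2 : ∀ u v, W u v ^ 2 = 1 - deriv φ u ^ 2 := by
    intro u v
    rw [hW, hE1, hF1, hG1]
    rw [Real.sq_sqrt (by nlinarith [hφ' u])]
    ring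
  have hFu1 : ∀ u v, Fu u v = deriv (deriv φ) u := by
    intro u v
    rw [hFu]
    have : (fun t => F t v) = deriv φ := funext fun t => hF1 t v
    rw [this]
  have hGu1 : ∀ u v, Gu u v = 0 := by
    intro u v
    rw [hGu]
    have : (fun t => G t v) = fun _ => (1:ℝ) := funext fun t => hG1 t v
    rw [this, deriv_const]
  -- main computation
  intro u v
  have h0 : (1 - deriv φ u ^ 2) ≠ 0 := ne_of_gt (hpos u)
  rw [hH, hhuu, hhuv, hhvv, hE1, hF1, hG1, hFu1, hGu1, hW2,
    hXuu' u v, hXuv' u v, hXvv' u v, hXu' u v, hXv' u v]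
  funext i
  fin_cases i
  · simp only [Pi.smul_apply, Pi.add_apply, Pi.sub_apply, smul_eq_mul,
      Matrix.cons_val_zero, Matrix.cons_val_one, Matrix.head_cons,
      Matrix.cons_val_two, Matrix.tail_cons, Matrix.cons_val_three, Matrix.cons_val',
      Matrix.cons_val_fin_one, Matrix.empty_val', Fin.reduceFinMk, Matrix.cons_val]
    field_simp
    ring
  · simp only [Pi.smul_apply, Pi.add_apply, Pi.sub_apply, smul_eq_mul,
      Matrix.cons_val_zero, Matrix.cons_val_one, Matrix.head_cons,
      Matrix.cons_val_two, Matrix.tail_cons, Matrix.cons_val_three, Matrix.cons_val',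
      Matrix.cons_val_fin_one, Matrix.empty_val', Fin.reduceFinMk, Matrix.cons_val]
    field_simp
    ring
  · simp only [Pi.smul_apply, Pi.add_apply, Pi.sub_apply, smul_eq_mul,
      Matrix.cons_val_zero, Matrix.cons_val_one, Matrix.head_cons,
      Matrix.cons_val_two, Matrix.tail_cons, Matrix.cons_val_three, Matrix.cons_val',
      Matrix.cons_val_fin_one, Matrix.empty_val', Fin.reduceFinMk, Matrix.cons_val]
    rw [hx₃'' u, hx₄'' u, hx₃' u, hx₄' u, hx₃φ u, hx₄φ u]
    field_simp
    ring_nf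
  · simp only [Pi.smul_apply, Pi.add_apply, Pi.sub_apply, smul_eq_mul,
      Matrix.cons_val_zero, Matrix.cons_val_one, Matrix.head_cons,
      Matrix.cons_val_two, Matrix.tail_cons, Matrix.cons_val_three, Matrix.cons_val',
      Matrix.cons_val_fin_one, Matrix.empty_val', Fin.reduceFinMk, Matrix.cons_val]
    rw [hx₃'' u, hx₄'' u, hx₃' u, hx₄' u, hx₃φ u, hx₄φ u]
    field_simp
    ring_nf
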